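/- For Λ > 0, 1 < p < 3, and r ∈ (0, R_Λ), the function A_p(r) = (1/(p-1))·√(1-(Λ/3)r²)·r^{(3-p)/(p-1)}·∫_r^{R_Λ} ρ^{-2/(p-1)}(1-(Λ/3)ρ²)^{-1/2} dρ satisfies lim_{p→1⁺} A_p(r) = 1/2 for every fixed r ∈ (0, R_Λ). -/

import Mathlib

open Real Filter MeasureTheory

/-- The radial profile of the model `p`-Green's function. -/
noncomputable def uModel (Λ p r : ℝ) : ℝ :=
  ∫ ρ in r..Real.sqrt (3 / Λ), ρ ^ (-(2 / (p - 1))) / Real.sqrt (1 - Λ / 3 * ρ ^ 2)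

/-- The quantity `A_p(r)` of the model. -/
noncomputable def AModel (Λ p r : ℝ) : ℝ :=
  1 / (p - 1) * Real.sqrt (1 - Λ / 3 * r ^ 2) * r ^ ((3 - p) / (p - 1)) * uModel Λ p r

/-!
Put `e = (3 - p) / (p - 1)`, which tends to `∞` as `p → 1⁺`, and `w ρ = (1 - Λ ρ² / 3)^(-1/2)`.
Then `A_p(r) = (3 - p)⁻¹ · w(r)⁻¹ · e r^e ∫_r^{R_Λ} ρ^(-(e+1)) w(ρ) dρ`. The kernel
`e r^e ρ^(-(e+1))` has mass `1 - (r/s)^e` on `[r, s]`, so it concentrates at `r`: on a short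
interval `[r, s]` it only sees values of `w` close to `w(r)`, and on `[s, R_Λ]` it is bounded by
`e (r/s)^e / s → 0`, while `w` is integrable there, being the derivative of an arcsine.
Hence the integral factor tends to `w(r)` and `A_p(r) → 1/2`.
-/

open Set Topology

theorem intervalIntegrable_inv_sqrt_one_sub_mul_sq {c : ℝ} (hc : 0 < c) :
    IntervalIntegrable (fun x => (√(1 - c * x ^ 2))⁻¹) volume 0 √c⁻¹ := by
  have hc' : 0 < √c := sqrt_pos.mpr hc
  have hsq : ∀ x, (√c * x) ^ 2 = c * x ^ 2 := fun x => by rw [mul_pow, sq_sqrt hc.le]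
  refine intervalIntegral.intervalIntegrable_deriv_of_nonneg (g := fun x => arcsin (√c * x) / √c)
    (by fun_prop) (fun x hx => ?_) (fun x _ => by positivity)
  rw [min_eq_left (by positivity), max_eq_right (by positivity)] at hx
  have hx1 : √c * x < 1 := by
    calc √c * x < √c * √c⁻¹ := by gcongr; exact hx.2
      _ = 1 := by rw [sqrt_inv, mul_inv_cancel₀ hc'.ne']
  have hd := ((hasDerivAt_arcsin (by nlinarith [hx.1]) hx1.ne).comp x
    ((hasDerivAt_id x).const_mul √c)).div_const √c
  exact hd.congr_deriv (by rw [hsq]; field_simp)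

theorem rpow_mul_rpow_neg_add_one {r s : ℝ} (hr : 0 ≤ r) (hs : 0 < s) (e : ℝ) :
    r ^ e * s ^ (-(e + 1)) = (r / s) ^ e / s := by
  rw [neg_add, rpow_add hs, rpow_neg hs.le, rpow_neg_one, div_rpow hr hs.le]
  ring

theorem mul_rpow_mul_integral_rpow_neg {r s e : ℝ} (hr : 0 < r) (hs : 0 < s) (he : e ≠ 0) :
    e * r ^ e * ∫ ρ in r..s, ρ ^ (-(e + 1)) = 1 - (r / s) ^ e := by
  have hne : -(e + 1) ≠ -1 := by contrapose! he; linarith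
  rw [integral_rpow (Or.inr ⟨hne, notMem_uIcc_of_lt hr hs⟩), show -(e + 1) + 1 = -e by ring,
    rpow_neg hs.le, rpow_neg hr.le, div_rpow hr.le hs.le]
  have := (rpow_pos_of_pos hr e).ne'
  field_simp
  ring

theorem tendsto_mul_rpow_atTop_nhds_zero_of_lt_one {c : ℝ} (hc₀ : 0 < c) (hc₁ : c < 1) :
    Tendsto (fun e : ℝ => e * c ^ e) atTop (𝓝 0) := by
  have hlog : 0 < -log c := neg_pos.mpr (log_neg hc₀ hc₁)
  refine (tendsto_rpow_mul_exp_neg_mul_atTop_nhds_zero 1 _ hlog).congr fun e => ?_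
  rw [rpow_one, rpow_def_of_pos hc₀, neg_neg, mul_comm e]

theorem IntervalIntegrable.id_rpow_mul {f : ℝ → ℝ} {a b : ℝ} (ha : 0 < a) (hb : 0 < b)
    (hf : IntervalIntegrable f volume a b) (t : ℝ) :
    IntervalIntegrable (fun x => x ^ t * f x) volume a b :=
  hf.continuousOn_mul <| continuousOn_id.rpow_const fun _ hx =>
    Or.inl (lt_min ha hb |>.trans_le hx.1).ne'

theorem norm_mul_rpow_mul_integral_rpow_neg_mul_le {v : ℝ → ℝ} {r s R e ε : ℝ} (hr : 0 < r)
    (hrs : r < s) (hsR : s ≤ R) (he : 0 < e) (hv : IntervalIntegrable v volume r R)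
    (hvε : ∀ x ∈ Ioc r s, ‖v x‖ ≤ ε) :
    ‖e * r ^ e * ∫ ρ in r..R, ρ ^ (-(e + 1)) * v ρ‖
      ≤ ε + e * (r / s) ^ e / s * ∫ ρ in s..R, ‖v ρ‖ := by
  have hs : 0 < s := hr.trans hrs
  have hε : 0 ≤ ε := (norm_nonneg _).trans (hvε s ⟨hrs, le_rfl⟩)
  have hk := hv.id_rpow_mul hr (hs.trans_le hsR) (-(e + 1))
  have hrsR : uIcc r s ⊆ uIcc r R := uIcc_subset_uIcc left_mem_uIcc (mem_uIcc_of_le hrs.le hsR)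
  have hsRR : uIcc s R ⊆ uIcc r R := uIcc_subset_uIcc (mem_uIcc_of_le hrs.le hsR) right_mem_uIcc
  have hnear : ‖∫ ρ in r..s, ρ ^ (-(e + 1)) * v ρ‖ ≤ ε * ∫ ρ in r..s, ρ ^ (-(e + 1)) := by
    rw [← intervalIntegral.integral_const_mul]
    refine intervalIntegral.norm_integral_le_of_norm_le hrs.le (ae_of_all _ fun x hx => ?_)
      ((intervalIntegral.intervalIntegrable_rpow (Or.inr (notMem_uIcc_of_lt hr hs))).const_mul ε)
    rw [norm_mul, norm_of_nonneg (rpow_nonneg (hr.trans hx.1).le _), mul_comm ε]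
    exact mul_le_mul_of_nonneg_left (hvε x hx) (rpow_nonneg (hr.trans hx.1).le _)
  have hfar : ‖∫ ρ in s..R, ρ ^ (-(e + 1)) * v ρ‖ ≤ s ^ (-(e + 1)) * ∫ ρ in s..R, ‖v ρ‖ := by
    rw [← intervalIntegral.integral_const_mul]
    refine intervalIntegral.norm_integral_le_of_norm_le hsR (ae_of_all _ fun x hx => ?_)
      ((hv.mono_set hsRR).norm.const_mul _)
    rw [norm_mul, norm_of_nonneg (rpow_nonneg (hs.trans hx.1).le _)]
    exact mul_le_mul_of_nonneg_right
      (rpow_le_rpow_of_nonpos hs hx.1.le (by linarith)) (norm_nonneg _)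
  rw [← intervalIntegral.integral_add_adjacent_intervals (hk.mono_set hrsR) (hk.mono_set hsRR)]
  have hc : 0 ≤ e * r ^ e := by positivity
  calc ‖e * r ^ e * ((∫ ρ in r..s, ρ ^ (-(e + 1)) * v ρ) + ∫ ρ in s..R, ρ ^ (-(e + 1)) * v ρ)‖
      ≤ e * r ^ e * (ε * (∫ ρ in r..s, ρ ^ (-(e + 1))) + s ^ (-(e + 1)) * ∫ ρ in s..R, ‖v ρ‖) := by
        rw [norm_mul, norm_of_nonneg hc]
        exact mul_le_mul_of_nonneg_left ((norm_add_le _ _).trans (add_le_add hnear hfar)) hc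
    _ = ε * (1 - (r / s) ^ e) + e * (r / s) ^ e / s * ∫ ρ in s..R, ‖v ρ‖ := by
        rw [← mul_rpow_mul_integral_rpow_neg hr hs he.ne', mul_div_assoc,
          ← rpow_mul_rpow_neg_add_one hr.le hs]
        ring
    _ ≤ ε + e * (r / s) ^ e / s * ∫ ρ in s..R, ‖v ρ‖ := by
        gcongr
        exact mul_le_of_le_one_right hε (sub_le_self _ (by positivity))

theorem tendsto_mul_rpow_mul_integral_rpow_neg_mul_of_tendsto_zero {v : ℝ → ℝ} {r R : ℝ}
    (hr : 0 < r) (hrR : r < R) (hv : IntervalIntegrable v volume r R)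
    (hv₀ : Tendsto v (𝓝[>] r) (𝓝 0)) :
    Tendsto (fun e => e * r ^ e * ∫ ρ in r..R, ρ ^ (-(e + 1)) * v ρ) atTop (𝓝 0) := by
  rw [Metric.tendsto_nhds]
  intro ε hε
  obtain ⟨s, hrs, hs⟩ :=
    mem_nhdsGT_iff_exists_Ioc_subset.mp (hv₀ (Metric.closedBall_mem_nhds 0 (half_pos hε)))
  set s' := min s R
  have hrs' : r < s' := lt_min hrs hrR
  have hvε : ∀ x ∈ Ioc r s', ‖v x‖ ≤ ε / 2 := fun x hx => by
    simpa using hs ⟨hx.1, hx.2.trans (min_le_left _ _)⟩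
  have htail : Tendsto (fun e => e * (r / s') ^ e / s' * ∫ ρ in s'..R, ‖v ρ‖) atTop (𝓝 0) := by
    simpa using ((tendsto_mul_rpow_atTop_nhds_zero_of_lt_one (div_pos hr (hr.trans hrs'))
      ((div_lt_one (hr.trans hrs')).mpr hrs')).div_const s').mul_const (∫ ρ in s'..R, ‖v ρ‖)
  filter_upwards [htail.eventually_lt_const (half_pos hε), eventually_gt_atTop 0] with e htail he
  rw [dist_zero_right]
  exact (norm_mul_rpow_mul_integral_rpow_neg_mul_le hr hrs' (min_le_right _ _) he hv hvε).trans_lt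
    (by linarith)

theorem tendsto_mul_rpow_mul_integral_rpow_neg_mul {w : ℝ → ℝ} {r R L : ℝ} (hr : 0 < r)
    (hrR : r < R) (hw : IntervalIntegrable w volume r R) (hwL : Tendsto w (𝓝[>] r) (𝓝 L)) :
    Tendsto (fun e => e * r ^ e * ∫ ρ in r..R, ρ ^ (-(e + 1)) * w ρ) atTop (𝓝 L) := by
  have hR : 0 < R := hr.trans hrR
  have herr := tendsto_mul_rpow_mul_integral_rpow_neg_mul_of_tendsto_zero hr hrR
    (hw.sub intervalIntegrable_const) (by simpa using hwL.sub_const L)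
  have hmass : Tendsto (fun e : ℝ => 1 - (r / R) ^ e) atTop (𝓝 1) := by
    simpa using tendsto_const_nhds.sub (tendsto_rpow_atTop_of_base_lt_one _
      (by linarith [div_pos hr hR]) ((div_lt_one hR).mpr hrR))
  have hlim := herr.add (hmass.const_mul L)
  rw [zero_add, mul_one] at hlim
  refine hlim.congr' ?_
  filter_upwards [eventually_gt_atTop 0] with e he
  rw [← mul_rpow_mul_integral_rpow_neg hr hR he.ne']
  simp_rw [mul_sub]
  rw [intervalIntegral.integral_sub (hw.id_rpow_mul hr hR _)
    (intervalIntegrable_const.id_rpow_mul hr hR _), intervalIntegral.integral_mul_const]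
  ring

theorem tendsto_div_sub_one_nhdsGT_one_atTop :
    Tendsto (fun p : ℝ => (3 - p) / (p - 1)) (𝓝[>] 1) atTop := by
  have hsub : Tendsto (fun p : ℝ => p - 1) (𝓝[>] 1) (𝓝[>] 0) :=
    tendsto_nhdsWithin_iff.mpr
      ⟨((continuous_sub_right 1).tendsto' 1 0 (sub_self 1)).mono_left nhdsWithin_le_nhds,
        eventually_mem_nhdsWithin.mono fun _ hp => mem_Ioi.mpr (sub_pos.mpr hp)⟩
  have hnum : Tendsto (fun p : ℝ => 3 - p) (𝓝[>] 1) (𝓝 2) :=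
    ((continuous_sub_left 3).tendsto' 1 2 (by norm_num)).mono_left nhdsWithin_le_nhds
  exact hnum.pos_mul_atTop two_pos (tendsto_inv_nhdsGT_zero.comp hsub)

theorem AModel_eq_mul_integral {Λ p r : ℝ} (hp₁ : 1 < p) (hp₃ : p < 3) :
    AModel Λ p r = (3 - p)⁻¹ * √(1 - Λ / 3 * r ^ 2) *
      ((3 - p) / (p - 1) * r ^ ((3 - p) / (p - 1)) *
        ∫ ρ in r..√(3 / Λ), ρ ^ (-((3 - p) / (p - 1) + 1)) * (√(1 - Λ / 3 * ρ ^ 2))⁻¹) := by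
  have hp₁' : p - 1 ≠ 0 := sub_ne_zero.mpr hp₁.ne'
  have hp₃' : 3 - p ≠ 0 := sub_ne_zero.mpr hp₃.ne'
  have hexp : 2 / (p - 1) = (3 - p) / (p - 1) + 1 := by field_simp; ring
  rw [AModel, uModel, hexp]
  simp_rw [← div_eq_mul_inv]
  field_simp

/-- For every fixed `r ∈ (0, R_Λ)`, `A_p(r) → 1/2` as `p → 1⁺`. -/
theorem stmt_16 (Λ : ℝ) (hΛ : 0 < Λ) (r : ℝ)
    (hr : r ∈ Set.Ioo (0 : ℝ) (Real.sqrt (3 / Λ))) :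
    Tendsto (fun p : ℝ => AModel Λ p r) (nhdsWithin 1 (Set.Ioi 1))
      (nhds (1 / 2)) := by
  obtain ⟨hr₀, hrR⟩ := hr
  have hB : 0 < 1 - Λ / 3 * r ^ 2 := by
    have := (lt_sqrt hr₀.le).mp hrR
    rw [lt_div_iff₀ hΛ] at this
    linarith
  have hw : IntervalIntegrable (fun ρ => (√(1 - Λ / 3 * ρ ^ 2))⁻¹) volume r √(3 / Λ) := by
    have h := intervalIntegrable_inv_sqrt_one_sub_mul_sq (div_pos hΛ three_pos)
    rw [inv_div] at h
    exact h.mono_set (uIcc_subset_uIcc (mem_uIcc_of_le hr₀.le hrR.le) right_mem_uIcc)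
  have hwr : Tendsto (fun ρ => (√(1 - Λ / 3 * ρ ^ 2))⁻¹) (𝓝[>] r) (𝓝 (√(1 - Λ / 3 * r ^ 2))⁻¹) :=
    (ContinuousAt.inv₀ (f := fun ρ => √(1 - Λ / 3 * ρ ^ 2)) (by fun_prop)
      (sqrt_pos.mpr hB).ne').tendsto.mono_left nhdsWithin_le_nhds
  have hfactor : Tendsto (fun p : ℝ => (3 - p)⁻¹) (𝓝[>] 1) (𝓝 2⁻¹) :=
    (((continuous_sub_left 3).tendsto' 1 2 (by norm_num)).inv₀ two_ne_zero).mono_left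
      nhdsWithin_le_nhds
  have hlim := (hfactor.mul_const (√(1 - Λ / 3 * r ^ 2))).mul
    ((tendsto_mul_rpow_mul_integral_rpow_neg_mul hr₀ hrR hw hwr).comp
      tendsto_div_sub_one_nhdsGT_one_atTop)
  rw [mul_assoc, mul_inv_cancel₀ (sqrt_pos.mpr hB).ne', mul_one, ← one_div] at hlim
  refine hlim.congr' ?_
  filter_upwards [Ioo_mem_nhdsGT (by norm_num : (1 : ℝ) < 3)] with p hp
  exact (AModel_eq_mul_integral hp.1 hp.2).symm
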